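/- arXiv:math/0403016 — 4 statements merged into one kernel-verified Lean document; each statement's English description precedes it below -/
import Mathlib

section
/- Suppose (X_t)_{t≥0} satisfies conditions (cov) and (LR). Then for all 0 ≤ s < t < u, almost surely E(X_t | F_{≤s} ∨ F_{≥u}) = ((u−t)/(u−s)) X_s + ((t−s)/(u−s)) X_u (i.e. the coefficients in (LR) are a(s,t,u) = (u−t)/(u−s) and b(s,t,u) = (t−s)/(u−s)); moreover E(X_t | F_{≤s}) = X_s almost surely for all 0 ≤ s ≤ t, and E(X_t | F_{≥u}) = (t/u) X_u almost surely for all 0 < t < u. -/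
open MeasureTheory

noncomputable section

/-- The σ-field generated by the process `X` on the time interval `[0, s]`. -/
def sigmaLE {Ω : Type*} [MeasurableSpace Ω] {E : Type*} [MeasurableSpace E]
    (X : ℝ → Ω → E) (s : ℝ) : MeasurableSpace Ω :=
  ⨆ r ∈ Set.Icc (0:ℝ) s, MeasurableSpace.comap (X r) inferInstance

/-- The σ-field generated by the process `X` on the time interval `[u, ∞)`. -/
def sigmaGE {Ω : Type*} [MeasurableSpace Ω] {E : Type*} [MeasurableSpace E]
    (X : ℝ → Ω → E) (u : ℝ) : MeasurableSpace Ω :=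
  ⨆ r ∈ Set.Ici u, MeasurableSpace.comap (X r) inferInstance

/-!
Testing the regression `E(X_t | F_{≤s} ∨ F_{≥u}) = a X_s + b X_u` against `X_s` and `X_u`,
both measurable for `F_{≤s} ∨ F_{≥u}`, gives `a s + b s = s` and `a s + b u = t`, which
determine `b`, and `a` as well unless `s = 0`, where `X_0 = 0` makes `a` irrelevant.
Conditioning this bridge formula further on `F_{≤s}` gives
`E(X_t - X_s | F_{≤s}) = (t-s)/(u-s) · E(X_u - X_s | F_{≤s})`; since conditional expectation is
an L² contraction and `E(X_u - X_s)² = u - s`, the left side has second moment at most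
`(t-s)²/(u-s)`, which tends to `0` as `u → ∞`. With `s = 0`, conditioning the bridge formula
on `F_{≥u}` gives the backward formula.
-/

open Filter

section ConditionalExpectation

variable {Ω : Type*} {m m' m0 : MeasurableSpace Ω} {μ : Measure Ω} {f g : Ω → ℝ}

lemma integral_condExp_mul_of_stronglyMeasurable [IsFiniteMeasure μ] (hm : m ≤ m0)
    (hf : MemLp f 2 μ) (hg : MemLp g 2 μ) (hgm : StronglyMeasurable[m] g) :
    ∫ ω, μ[f|m] ω * g ω ∂μ = ∫ ω, f ω * g ω ∂μ := by
  have hpull : μ[g * f|m] =ᵐ[μ] g * μ[f|m] :=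
    condExp_mul_of_stronglyMeasurable_left hgm (hg.integrable_mul hf) (hf.integrable one_le_two)
  calc ∫ ω, μ[f|m] ω * g ω ∂μ = ∫ ω, μ[g * f|m] ω ∂μ :=
        integral_congr_ae (hpull.mono fun ω h => by rw [h, Pi.mul_apply, mul_comm])
    _ = ∫ ω, f ω * g ω ∂μ := by
        rw [integral_condExp hm]
        simp [mul_comm]

lemma integral_sq_condExp_le (hf : MemLp f 2 μ) :
    ∫ ω, μ[f|m] ω ^ 2 ∂μ ≤ ∫ ω, f ω ^ 2 ∂μ := by
  simpa [Real.norm_eq_abs, sq_abs] using integral_norm_condExp_rpow_le (m := m) one_le_two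
    (hf.integrable_norm_rpow two_ne_zero ENNReal.ofNat_ne_top)

lemma condExp_of_le_of_condExp_ae_eq_smul [IsFiniteMeasure μ] (hmm' : m ≤ m') (hm' : m' ≤ m0)
    {c : ℝ} (h : μ[f|m'] =ᵐ[μ] c • g) : μ[f|m] =ᵐ[μ] c • μ[g|m] :=
  (condExp_condExp_of_le hmm' hm').symm.trans ((condExp_congr_ae h).trans (condExp_smul c g m))

end ConditionalExpectation

structure HasBrownianCovariance {Ω : Type*} {mΩ : MeasurableSpace Ω} (μ : Measure Ω)
    (X : ℝ → Ω → ℝ) : Prop where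
  memLp : ∀ t, 0 ≤ t → MemLp (X t) 2 μ
  integral_mul : ∀ s t, 0 ≤ s → 0 ≤ t → ∫ ω, X t ω * X s ω ∂μ = min t s

section

variable {Ω : Type*} [mΩ : MeasurableSpace Ω] {μ : Measure Ω} {X : ℝ → Ω → ℝ}

lemma sigmaLE_le (hmeas : ∀ t, Measurable (X t)) (s : ℝ) : sigmaLE X s ≤ mΩ :=
  iSup₂_le fun r _ => (hmeas r).comap_le

lemma sigmaGE_le (hmeas : ∀ t, Measurable (X t)) (u : ℝ) : sigmaGE X u ≤ mΩ :=
  iSup₂_le fun r _ => (hmeas r).comap_le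

lemma measurable_sigmaLE {r s : ℝ} (hr : r ∈ Set.Icc 0 s) : Measurable[sigmaLE X s] (X r) :=
  measurable_iff_comap_le.mpr
    (le_iSup₂ (f := fun r (_ : r ∈ Set.Icc (0 : ℝ) s) => MeasurableSpace.comap (X r) _) r hr)

lemma measurable_sigmaGE {r u : ℝ} (hr : r ∈ Set.Ici u) : Measurable[sigmaGE X u] (X r) :=
  measurable_iff_comap_le.mpr
    (le_iSup₂ (f := fun r (_ : r ∈ Set.Ici u) => MeasurableSpace.comap (X r) _) r hr)

lemma condExp_sigmaLE_self [IsFiniteMeasure μ] (hmeas : ∀ t, Measurable (X t)) {s : ℝ}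
    (hs : 0 ≤ s) (hint : Integrable (X s) μ) : μ[X s|sigmaLE X s] = X s :=
  condExp_of_stronglyMeasurable (sigmaLE_le hmeas s)
    (measurable_sigmaLE ⟨hs, le_rfl⟩).stronglyMeasurable hint

lemma condExp_sigmaGE_self [IsFiniteMeasure μ] (hmeas : ∀ t, Measurable (X t)) {u : ℝ}
    (hint : Integrable (X u) μ) : μ[X u|sigmaGE X u] = X u :=
  condExp_of_stronglyMeasurable (sigmaGE_le hmeas u)
    (measurable_sigmaGE (Set.mem_Ici.mpr le_rfl)).stronglyMeasurable hint

namespace HasBrownianCovariance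

lemma integral_sq_sub (hX : HasBrownianCovariance μ X) {s u : ℝ} (hs : 0 ≤ s) (hsu : s ≤ u) :
    ∫ ω, (X u ω - X s ω) ^ 2 ∂μ = u - s := by
  have hu : 0 ≤ u := hs.trans hsu
  have hint : ∀ a b, 0 ≤ a → 0 ≤ b → Integrable (fun ω => X a ω * X b ω) μ :=
    fun a b ha hb => (hX.memLp a ha).integrable_mul (hX.memLp b hb)
  have hint' : Integrable (fun ω => X u ω * X u ω - 2 * (X u ω * X s ω)) μ :=
    (hint u u hu hu).sub ((hint u s hu hs).const_mul 2)
  calc ∫ ω, (X u ω - X s ω) ^ 2 ∂μ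
        = ∫ ω, X u ω * X u ω - 2 * (X u ω * X s ω) + X s ω * X s ω ∂μ := by
          congr 1; funext ω; ring
    _ = min u u - 2 * min u s + min s s := by
          rw [integral_add hint' (hint s s hs hs),
            integral_sub (hint u u hu hu) ((hint u s hu hs).const_mul 2), integral_const_mul,
            hX.integral_mul u u hu hu, hX.integral_mul s u hs hu, hX.integral_mul s s hs hs]
    _ = u - s := by
          rw [min_self, min_self, min_eq_right hsu]; ring

lemma covariance_eq_of_condExp_eq [IsFiniteMeasure μ] (hX : HasBrownianCovariance μ X)
    {m : MeasurableSpace Ω} (hm : m ≤ mΩ) {a b s t u r : ℝ} (hs : 0 ≤ s) (ht : 0 ≤ t)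
    (hu : 0 ≤ u) (hr : 0 ≤ r) (hXr : Measurable[m] (X r))
    (h : μ[X t|m] =ᵐ[μ] fun ω => a * X s ω + b * X u ω) :
    a * min s r + b * min u r = min t r := by
  have hint : ∀ v, 0 ≤ v → Integrable (fun ω => X v ω * X r ω) μ :=
    fun v hv => (hX.memLp v hv).integrable_mul (hX.memLp r hr)
  calc a * min s r + b * min u r = ∫ ω, (a * X s ω + b * X u ω) * X r ω ∂μ := by
        simp only [add_mul, mul_assoc]
        rw [integral_add ((hint s hs).const_mul a) ((hint u hu).const_mul b), integral_const_mul,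
          integral_const_mul, hX.integral_mul r s hr hs, hX.integral_mul r u hr hu]
    _ = ∫ ω, μ[X t|m] ω * X r ω ∂μ := integral_congr_ae (h.mono fun ω hω => by simp only [hω])
    _ = ∫ ω, X t ω * X r ω ∂μ :=
        integral_condExp_mul_of_stronglyMeasurable hm (hX.memLp t ht) (hX.memLp r hr)
          hXr.stronglyMeasurable
    _ = min t r := hX.integral_mul r t hr ht

lemma condExp_sigmaLE_sup_sigmaGE [IsFiniteMeasure μ] (hX : HasBrownianCovariance μ X)
    (hmeas : ∀ t, Measurable (X t)) (hX0 : ∀ ω, X 0 ω = 0) {a b s t u : ℝ} (hs : 0 ≤ s)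
    (hst : s < t) (htu : t < u)
    (h : μ[X t|sigmaLE X s ⊔ sigmaGE X u] =ᵐ[μ] fun ω => a * X s ω + b * X u ω) :
    μ[X t|sigmaLE X s ⊔ sigmaGE X u] =ᵐ[μ]
      fun ω => (u - t) / (u - s) * X s ω + (t - s) / (u - s) * X u ω := by
  have ht : 0 ≤ t := hs.trans hst.le
  have hsu : s < u := hst.trans htu
  have hu : 0 ≤ u := hs.trans hsu.le
  have hm := sup_le (sigmaLE_le hmeas s) (sigmaGE_le hmeas u)
  have eq_s : a * s + b * s = s := by
    simpa [min_eq_right hsu.le, min_eq_right hst.le] using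
      hX.covariance_eq_of_condExp_eq hm hs ht hu hs
        ((measurable_sigmaLE ⟨hs, le_rfl⟩).mono le_sup_left le_rfl) h
  have eq_u : a * s + b * u = t := by
    simpa [min_eq_left hsu.le, min_eq_left htu.le] using
      hX.covariance_eq_of_condExp_eq hm hs ht hu hu
        ((measurable_sigmaGE (Set.mem_Ici.mpr le_rfl)).mono le_sup_right le_rfl) h
  have hb : b = (t - s) / (u - s) := by
    rw [eq_div_iff (sub_ne_zero.mpr hsu.ne')]
    linear_combination eq_u - eq_s
  refine h.trans (.of_forall fun ω => ?_)
  rcases hs.eq_or_lt with rfl | hs_pos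
  · simp [hX0, hb]
  · have hab : a + b = 1 := mul_right_cancel₀ hs_pos.ne' (by linear_combination eq_s)
    have ha : a = (u - t) / (u - s) := by
      rw [eq_sub_of_add_eq hab, hb]
      field_simp [sub_ne_zero.mpr hsu.ne']
      ring
    simp only [ha, hb]

lemma condExp_increment_sigmaLE [IsFiniteMeasure μ] (hX : HasBrownianCovariance μ X)
    (hmeas : ∀ t, Measurable (X t)) {s t u : ℝ} (hs : 0 ≤ s) (hst : s < t) (htu : t < u)
    (hbridge : μ[X t|sigmaLE X s ⊔ sigmaGE X u] =ᵐ[μ]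
      fun ω => (u - t) / (u - s) * X s ω + (t - s) / (u - s) * X u ω) :
    μ[X t - X s|sigmaLE X s] =ᵐ[μ] ((t - s) / (u - s)) • μ[X u - X s|sigmaLE X s] := by
  have hsu : s < u := hst.trans htu
  have hm := sup_le (sigmaLE_le hmeas s) (sigmaGE_le hmeas u)
  have hint : ∀ v, 0 ≤ v → Integrable (X v) μ := fun v hv => (hX.memLp v hv).integrable one_le_two
  have hXs_meas : Measurable[sigmaLE X s ⊔ sigmaGE X u] (X s) :=
    (measurable_sigmaLE ⟨hs, le_rfl⟩).mono le_sup_left le_rfl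
  have hXs : μ[X s|sigmaLE X s ⊔ sigmaGE X u] = X s :=
    condExp_of_stronglyMeasurable hm hXs_meas.stronglyMeasurable (hint s hs)
  refine condExp_of_le_of_condExp_ae_eq_smul le_sup_left hm ?_
  filter_upwards [condExp_sub (hint t (hs.trans hst.le)) (hint s hs) (sigmaLE X s ⊔ sigmaGE X u),
    hbridge] with ω hsub hω
  rw [hsub, Pi.sub_apply, hω, hXs]
  simp only [Pi.smul_apply, Pi.sub_apply, smul_eq_mul]
  field_simp [sub_ne_zero.mpr hsu.ne']
  ring

lemma integral_sq_condExp_increment_sigmaLE_le [IsFiniteMeasure μ]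
    (hX : HasBrownianCovariance μ X) (hmeas : ∀ t, Measurable (X t)) {s t u : ℝ} (hs : 0 ≤ s)
    (hst : s < t) (htu : t < u)
    (hbridge : μ[X t|sigmaLE X s ⊔ sigmaGE X u] =ᵐ[μ]
      fun ω => (u - t) / (u - s) * X s ω + (t - s) / (u - s) * X u ω) :
    ∫ ω, μ[X t - X s|sigmaLE X s] ω ^ 2 ∂μ ≤ (t - s) ^ 2 / (u - s) := by
  have hsu : s < u := hst.trans htu
  have hincr := hX.condExp_increment_sigmaLE hmeas hs hst htu hbridge
  calc ∫ ω, μ[X t - X s|sigmaLE X s] ω ^ 2 ∂μ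
        = ((t - s) / (u - s)) ^ 2 * ∫ ω, μ[X u - X s|sigmaLE X s] ω ^ 2 ∂μ := by
          rw [← integral_const_mul]
          exact integral_congr_ae (hincr.mono fun ω hω => by simp [hω, mul_pow])
    _ ≤ ((t - s) / (u - s)) ^ 2 * ∫ ω, (X u ω - X s ω) ^ 2 ∂μ := by
          refine mul_le_mul_of_nonneg_left ?_ (sq_nonneg _)
          exact integral_sq_condExp_le ((hX.memLp u (hs.trans hsu.le)).sub (hX.memLp s hs))
    _ = (t - s) ^ 2 / (u - s) := by
          rw [hX.integral_sq_sub hs hsu.le]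
          field_simp [sub_ne_zero.mpr hsu.ne']

lemma condExp_sigmaLE_of_lt [IsFiniteMeasure μ] (hX : HasBrownianCovariance μ X)
    (hmeas : ∀ t, Measurable (X t)) {s t : ℝ} (hs : 0 ≤ s) (hst : s < t)
    (hbridge : ∀ u, t < u → μ[X t|sigmaLE X s ⊔ sigmaGE X u] =ᵐ[μ]
      fun ω => (u - t) / (u - s) * X s ω + (t - s) / (u - s) * X u ω) :
    μ[X t|sigmaLE X s] =ᵐ[μ] X s := by
  have ht : 0 ≤ t := hs.trans hst.le
  have hint : ∀ v, 0 ≤ v → Integrable (X v) μ := fun v hv => (hX.memLp v hv).integrable one_le_two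
  set P := μ[X t - X s|sigmaLE X s]
  have hbound : Tendsto (fun u => (t - s) ^ 2 / (u - s)) atTop (nhds 0) :=
    tendsto_const_nhds.div_atTop (tendsto_atTop_add_const_right _ (-s) tendsto_id)
  have hle : ∫ ω, P ω ^ 2 ∂μ ≤ 0 := ge_of_tendsto hbound ((eventually_gt_atTop t).mono
    fun u htu => hX.integral_sq_condExp_increment_sigmaLE_le hmeas hs hst htu (hbridge u htu))
  have hP : P =ᵐ[μ] 0 := by
    have hPsq : (fun ω => P ω ^ 2) =ᵐ[μ] 0 :=
      (integral_eq_zero_iff_of_nonneg (fun ω => sq_nonneg _)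
        (((hX.memLp t ht).sub (hX.memLp s hs)).condExp one_le_two).integrable_sq).mp
        (hle.antisymm (integral_nonneg fun ω => sq_nonneg _))
    filter_upwards [hPsq] with ω hω
    simpa using hω
  filter_upwards [hP, condExp_sub (hint t ht) (hint s hs) (sigmaLE X s)]
    with ω h0 hsub
  rw [condExp_sigmaLE_self hmeas hs (hint s hs)] at hsub
  simp only [P, Pi.zero_apply, Pi.sub_apply] at h0 hsub
  linarith

end HasBrownianCovariance

lemma condExp_sigmaGE [IsFiniteMeasure μ] (hmeas : ∀ t, Measurable (X t)) (hX0 : ∀ ω, X 0 ω = 0)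
    {t u : ℝ} (hint : Integrable (X u) μ)
    (hbridge : μ[X t|sigmaLE X 0 ⊔ sigmaGE X u] =ᵐ[μ]
      fun ω => (u - t) / (u - 0) * X 0 ω + (t - 0) / (u - 0) * X u ω) :
    μ[X t|sigmaGE X u] =ᵐ[μ] fun ω => t / u * X u ω := by
  have hm := sup_le (sigmaLE_le hmeas 0) (sigmaGE_le hmeas u)
  have h : μ[X t|sigmaLE X 0 ⊔ sigmaGE X u] =ᵐ[μ] (t / u) • X u :=
    hbridge.mono fun ω hω => by simp [hω, hX0]
  refine (condExp_of_le_of_condExp_ae_eq_smul le_sup_right hm h).trans ?_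
  rw [condExp_sigmaGE_self hmeas hint]
  rfl

end

theorem stmt0_general {Ω : Type*} [MeasurableSpace Ω] (μ : Measure Ω) [IsProbabilityMeasure μ]
    (X : ℝ → Ω → ℝ) (hmeas : ∀ t, Measurable (X t))
    (hL2 : ∀ t, 0 ≤ t → MemLp (X t) 2 μ)
    (hX0 : ∀ ω, X 0 ω = 0)
    (hcov : ∀ s t : ℝ, 0 ≤ s → 0 ≤ t → ∫ ω, X t ω * X s ω ∂μ = min t s)
    (a b : ℝ → ℝ → ℝ → ℝ)
    (hLR : ∀ s t u : ℝ, 0 ≤ s → s < t → t < u →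
      μ[X t | sigmaLE X s ⊔ sigmaGE X u] =ᵐ[μ]
        fun ω => a s t u * X s ω + b s t u * X u ω) :
    (∀ s t u : ℝ, 0 ≤ s → s < t → t < u →
      μ[X t | sigmaLE X s ⊔ sigmaGE X u] =ᵐ[μ]
        fun ω => (u - t)/(u - s) * X s ω + (t - s)/(u - s) * X u ω) ∧
    (∀ s t : ℝ, 0 ≤ s → s ≤ t → μ[X t | sigmaLE X s] =ᵐ[μ] X s) ∧
    (∀ t u : ℝ, 0 < t → t < u → μ[X t | sigmaGE X u] =ᵐ[μ] fun ω => t/u * X u ω) := by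
  have hX : HasBrownianCovariance μ X := ⟨hL2, hcov⟩
  have bridge : ∀ s t u : ℝ, 0 ≤ s → s < t → t < u →
      μ[X t | sigmaLE X s ⊔ sigmaGE X u] =ᵐ[μ]
        fun ω => (u - t)/(u - s) * X s ω + (t - s)/(u - s) * X u ω :=
    fun s t u hs hst htu =>
      hX.condExp_sigmaLE_sup_sigmaGE hmeas hX0 hs hst htu (hLR s t u hs hst htu)
  refine ⟨bridge, fun s t hs hst => ?_, fun t u ht htu => ?_⟩
  · rcases hst.eq_or_lt with rfl | hst
    · rw [condExp_sigmaLE_self hmeas hs ((hL2 s hs).integrable one_le_two)]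
    · exact hX.condExp_sigmaLE_of_lt hmeas hs hst fun u htu => bridge s t u hs hst htu
  · exact condExp_sigmaGE hmeas hX0 ((hL2 u (ht.trans htu).le).integrable one_le_two)
      (bridge 0 t u le_rfl ht htu)

theorem stmt0 {Ω : Type*} [MeasurableSpace Ω] (μ : Measure Ω) [IsProbabilityMeasure μ]
    (X : ℝ → Ω → ℝ) (hmeas : ∀ t, Measurable (X t))
    (hL2 : ∀ t, 0 ≤ t → MemLp (X t) 2 μ)
    (hX0 : ∀ ω, X 0 ω = 0)
    (hmean : ∀ t : ℝ, 0 ≤ t → ∫ ω, X t ω ∂μ = 0)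
    (hcov : ∀ s t : ℝ, 0 ≤ s → 0 ≤ t → ∫ ω, X t ω * X s ω ∂μ = min t s)
    (a b : ℝ → ℝ → ℝ → ℝ)
    (hLR : ∀ s t u : ℝ, 0 ≤ s → s < t → t < u →
      μ[X t | sigmaLE X s ⊔ sigmaGE X u] =ᵐ[μ]
        fun ω => a s t u * X s ω + b s t u * X u ω) :
    (∀ s t u : ℝ, 0 ≤ s → s < t → t < u →
      μ[X t | sigmaLE X s ⊔ sigmaGE X u] =ᵐ[μ]
        fun ω => (u - t)/(u - s) * X s ω + (t - s)/(u - s) * X u ω) ∧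
    (∀ s t : ℝ, 0 ≤ s → s ≤ t → μ[X t | sigmaLE X s] =ᵐ[μ] X s) ∧
    (∀ t u : ℝ, 0 < t → t < u → μ[X t | sigmaGE X u] =ᵐ[μ] fun ω => t/u * X u ω) :=
  stmt0_general μ X hmeas hL2 hX0 hcov a b hLR
end
end

section
/- Let 0 ≤ s < t < u be reals, θ ∈ ℝ, τ ≥ 0, and q ∈ ℝ with u + τ − q s ≠ 0. Define A = ((u−t)/(u−s))·((u+τ−qt)/(u+τ−qs)), B = (1+q)·((t−s)/(u−s))·((u−t)/(u+τ−qs)), C = ((t−s)/(u−s))·((t+τ−qs)/(u+τ−qs)), D = (u−t)(t−s)/(u+τ−qs), α = −θ(u−t)(t−s)/((u−s)(u+τ−qs)), β = θ(u−t)(t−s)/((u−s)(u+τ−qs)). Then these quantities satisfy: t − A s − C u = B s + D; A + B + C = 1; A s² + B s u + C u² − t² = τ D; s α + u β = θ D; α + β = 0; and (u−s) B = (1+q) D. -/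
theorem stmt7_general (s t u θ τ q : ℝ) (hst : s < t) (htu : t < u)
    (hne : u + τ - q * s ≠ 0) :
    let A := ((u - t)/(u - s)) * ((u + τ - q*t)/(u + τ - q*s))
    let B := (1 + q) * ((t - s)/(u - s)) * ((u - t)/(u + τ - q*s))
    let C := ((t - s)/(u - s)) * ((t + τ - q*s)/(u + τ - q*s))
    let D := (u - t)*(t - s)/(u + τ - q*s)
    let α := -θ*(u - t)*(t - s)/((u - s)*(u + τ - q*s))
    let β := θ*(u - t)*(t - s)/((u - s)*(u + τ - q*s))
    t - A*s - C*u = B*s + D ∧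
    A + B + C = 1 ∧
    A*s^2 + B*s*u + C*u^2 - t^2 = τ*D ∧
    s*α + u*β = θ*D ∧
    α + β = 0 ∧
    (u - s)*B = (1 + q)*D := by
  intro A B C D α β
  have hus : u - s ≠ 0 := (sub_pos.mpr (hst.trans htu)).ne'
  -- `field_simp` recognises the denominator only in its normal form `u + τ - s * q`
  have hne' : u + τ - s * q ≠ 0 := mul_comm q s ▸ hne
  refine ⟨?_, ?_, ?_, ?_, ?_, ?_⟩ <;> simp only [A, B, C, D, α, β] <;> field_simp <;> ring

theorem stmt7 (s t u θ τ q : ℝ) (hs : 0 ≤ s) (hst : s < t) (htu : t < u)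
    (hτ : 0 ≤ τ) (hne : u + τ - q * s ≠ 0) :
    let A := ((u - t)/(u - s)) * ((u + τ - q*t)/(u + τ - q*s))
    let B := (1 + q) * ((t - s)/(u - s)) * ((u - t)/(u + τ - q*s))
    let C := ((t - s)/(u - s)) * ((t + τ - q*s)/(u + τ - q*s))
    let D := (u - t)*(t - s)/(u + τ - q*s)
    let α := -θ*(u - t)*(t - s)/((u - s)*(u + τ - q*s))
    let β := θ*(u - t)*(t - s)/((u - s)*(u + τ - q*s))
    t - A*s - C*u = B*s + D ∧
    A + B + C = 1 ∧
    A*s^2 + B*s*u + C*u^2 - t^2 = τ*D ∧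
    s*α + u*β = θ*D ∧
    α + β = 0 ∧
    (u - s)*B = (1 + q)*D :=
  stmt7_general s t u θ τ q hst htu hne
end

section
/- Let 0 ≤ s < t, τ ≥ 0 and −1 ≤ q ≤ 1. Then the series with nonnegative extended-real terms ∑_{n=1}^∞ 1/√( (t − s q^{n−1} + τ[n−1]_q)·[n]_q ) diverges (its sum is +∞), where [n]_q = 1 + q + ⋯ + q^{n−1} with [0]_q = 0, and terms with zero denominator are interpreted as +∞. -/
/-! Since `|q| ≤ 1`, both `|q ^ n| ≤ 1` and `|[n]_q| ≤ n`, so the quantity under the square root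
is `O((n + 1) ^ 2)`. Each term is therefore at least a constant multiple of `1 / (n + 1)`, and the
harmonic series diverges. -/

noncomputable section

/-- The q-integer `[n]_q = 1 + q + ⋯ + q^(n-1)`, with `[0]_q = 0`. -/
def qInt (q : ℝ) (n : ℕ) : ℝ := ∑ i ∈ Finset.range n, q ^ i

open scoped ENNReal

theorem ENNReal.tsum_inv_natCast_add_one : ∑' n : ℕ, ((n : ℝ≥0∞) + 1)⁻¹ = ∞ := by
  have hcoe (n : ℕ) : ((n : ℝ≥0∞) + 1)⁻¹ = (((n : NNReal) + 1)⁻¹ : NNReal) := by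
    rw [ENNReal.coe_inv (by positivity)]
    push_cast
    rfl
  simp_rw [hcoe, ENNReal.tsum_coe_eq_top_iff_not_summable_coe]
  push_cast
  exact_mod_cast mt (summable_nat_add_iff 1).mp Real.not_summable_natCast_inv

theorem ENNReal.tsum_one_div_ofReal_sqrt_eq_top {f : ℕ → ℝ} {C : ℝ}
    (hf : ∀ n, f n ≤ C * (n + 1) ^ 2) : ∑' n, 1 / ENNReal.ofReal √(f n) = ∞ := by
  set D := max C 1
  have hD : 0 < D := lt_max_of_lt_right one_pos
  have hsqrt (n : ℕ) : √(f n) ≤ √D * (n + 1) := by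
    rw [← Real.sqrt_sq (by positivity : (0 : ℝ) ≤ n + 1), ← Real.sqrt_mul hD.le]
    exact Real.sqrt_le_sqrt ((hf n).trans (by gcongr; exact le_max_left C 1))
  have hterm (n : ℕ) :
      (ENNReal.ofReal √D)⁻¹ * ((n : ℝ≥0∞) + 1)⁻¹ ≤ 1 / ENNReal.ofReal √(f n) := by
    rw [← ENNReal.mul_inv (by simp) (by simp), one_div]
    refine ENNReal.inv_le_inv.mpr ((ENNReal.ofReal_le_ofReal (hsqrt n)).trans_eq ?_)
    rw [ENNReal.ofReal_mul (Real.sqrt_nonneg D)]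
    norm_cast
  refine eq_top_mono (ENNReal.tsum_le_tsum hterm) ?_
  rw [ENNReal.tsum_mul_left, ENNReal.tsum_inv_natCast_add_one]
  exact ENNReal.mul_top (by simp)

theorem abs_qInt_le {q : ℝ} (hq : |q| ≤ 1) (n : ℕ) : |qInt q n| ≤ n := by
  calc |qInt q n| ≤ ∑ i ∈ Finset.range n, |q ^ i| := Finset.abs_sum_le_sum_abs _ _
    _ ≤ ∑ _i ∈ Finset.range n, (1 : ℝ) := by
        gcongr with i; exact (abs_pow q i).trans_le (pow_le_one₀ (abs_nonneg q) hq)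
    _ = n := by simp

theorem mul_qInt_succ_le {q : ℝ} (hq : |q| ≤ 1) (s t τ : ℝ) (n : ℕ) :
    (t - s * q ^ n + τ * qInt q n) * qInt q (n + 1) ≤ (|t| + |s| + |τ|) * (n + 1) ^ 2 := by
  have hpow : |q ^ n| ≤ 1 := (abs_pow q n).trans_le (pow_le_one₀ (abs_nonneg q) hq)
  have hfirst : |t - s * q ^ n + τ * qInt q n| ≤ (|t| + |s| + |τ|) * (n + 1) := by
    calc _ ≤ |t| + |s| * |q ^ n| + |τ| * |qInt q n| := by
          rw [← abs_mul, ← abs_mul]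
          exact (abs_add_le _ _).trans (add_le_add_left (abs_sub _ _) _)
      _ ≤ |t| + |s| * 1 + |τ| * n := by gcongr; exact abs_qInt_le hq n
      _ ≤ _ := by nlinarith [abs_nonneg t, abs_nonneg s, abs_nonneg τ, n.cast_nonneg (α := ℝ)]
  have hsecond : |qInt q (n + 1)| ≤ n + 1 := by exact_mod_cast abs_qInt_le hq (n + 1)
  calc _ ≤ |(t - s * q ^ n + τ * qInt q n) * qInt q (n + 1)| := le_abs_self _
    _ = _ := abs_mul _ _
    _ ≤ (|t| + |s| + |τ|) * (n + 1) * (n + 1) := by gcongr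
    _ = _ := by ring

theorem stmt8_general (s t τ q : ℝ)
    (hq1 : -1 ≤ q) (hq2 : q ≤ 1) :
    (∑' n : ℕ,
      (1 : ENNReal) /
        ENNReal.ofReal (Real.sqrt ((t - s * q ^ n + τ * qInt q n) * qInt q (n + 1)))) = ⊤ :=
  ENNReal.tsum_one_div_ofReal_sqrt_eq_top (mul_qInt_succ_le (abs_le.mpr ⟨hq1, hq2⟩) s t τ)

theorem stmt8 (s t τ q : ℝ) (hs : 0 ≤ s) (hst : s < t) (hτ : 0 ≤ τ)
    (hq1 : -1 ≤ q) (hq2 : q ≤ 1) :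
    (∑' n : ℕ,
      (1 : ENNReal) /
        ENNReal.ofReal (Real.sqrt ((t - s * q ^ n + τ * qInt q n) * qInt q (n + 1)))) = ⊤ :=
  stmt8_general s t τ q hq1 hq2
end
end

section
/- (Proposition 3.2, Chapman–Kolmogorov step) Fix real parameters θ ∈ ℝ, τ ≥ 0, −1 ≤ q ≤ 1, reals 0 ≤ s < t < u and x ∈ ℝ. Suppose μ is a Borel probability measure on ℝ with finite moments of all orders such that ∫ Q_n(y|x,s,t) μ(dy) = 0 for all n ≥ 1, and suppose (κ_y)_{y∈ℝ} is a measurable family of Borel probability measures on ℝ such that ∫ Q_k(z|y,t,u) κ_y(dz) = 0 for all y ∈ ℝ and all k ≥ 1, and such that ∫∫ |y|^a |z|^b κ_y(dz) μ(dy) < ∞ for all a, b ∈ ℕ. Let ν be the probability measure ν(A) = ∫ κ_y(A) μ(dy). Then ∫ Q_n(z|x,s,u) ν(dz) = 0 for all n ≥ 1. -/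
noncomputable section

/-- The q-factorial `[n]_q! = [1]_q [2]_q ⋯ [n]_q`, with `[0]_q! = 1`. -/
def qFact (q : ℝ) : ℕ → ℝ
  | 0 => 1
  | n + 1 => qFact q n * qInt q (n + 1)

/-- The q-binomial coefficient `[n choose k]_q = [n]_q! / ([k]_q! [n-k]_q!)`. -/
def qBinom (q : ℝ) (n k : ℕ) : ℝ := qFact q n / (qFact q k * qFact q (n - k))

/-- The polynomials `Q_n(y | x, s, t)` defined by `Q₀ = 1`, `Q₁(y|x) = y - x` and, for `n ≥ 1`,
`y Q_n(y|x) = Q_{n+1}(y|x) + (θ[n]_q + x qⁿ) Q_n(y|x) + (t - s q^(n-1) + τ[n-1]_q)[n]_q Q_{n-1}(y|x)`. -/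
def Qpoly (θ τ q : ℝ) : ℕ → ℝ → ℝ → ℝ → ℝ → ℝ
  | 0, _, _, _, _ => 1
  | 1, y, x, _, _ => y - x
  | n + 2, y, x, s, t =>
      (y - (θ * qInt q (n + 1) + x * q ^ (n + 1))) * Qpoly θ τ q (n + 1) y x s t
        - (t - s * q ^ n + τ * qInt q n) * qInt q (n + 1) * Qpoly θ τ q n y x s t

/-!
Condition on the intermediate value `y`. The key is the q-binomial convolution identity
`Q_n(z|x,s,u) = ∑ₖ [n choose k]_q Q_k(z|y,t,u) Q_{n-k}(y|x,s,t)`: the right side satisfies the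
three-term recurrence of the left side, the coefficients matching by the q-Pascal rule and the
absorption identities `[k+1]_q [n+1 choose k+1]_q = [n+1]_q [n choose k]_q`. Integrating in `z`
against `κ_y` kills every term with `k ≥ 1` and leaves `Q_n(y|x,s,t)`, whose `μ`-integral
vanishes. Finite moments make all the polynomials integrable, which justifies exchanging the
sums and integrals.
-/

open Finset

lemma qInt_zero (q : ℝ) : qInt q 0 = 0 := by simp [qInt]

lemma qInt_one (q : ℝ) : qInt q 1 = 1 := by simp [qInt]

lemma qInt_succ (q : ℝ) (n : ℕ) : qInt q (n + 1) = qInt q n + q ^ n :=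
  sum_range_succ _ _

lemma qInt_add (q : ℝ) (a b : ℕ) : qInt q (a + b) = qInt q a + q ^ a * qInt q b := by
  induction b with
  | zero => simp [qInt_zero]
  | succ b ih => rw [← add_assoc, qInt_succ, ih, qInt_succ, pow_add]; ring

lemma qInt_eq_add_of_le (q : ℝ) {k n : ℕ} (hkn : k ≤ n) :
    qInt q n = qInt q k + q ^ k * qInt q (n - k) := by
  rw [← qInt_add, Nat.add_sub_cancel' hkn]

/-- The Gaussian binomial coefficient, defined by the q-Pascal rule. Unlike `qBinom`, which
divides by q-factorials vanishing at roots of unity such as `q = -1`, it is correct for all `q`. -/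
def gaussBinom (q : ℝ) : ℕ → ℕ → ℝ
  | _, 0 => 1
  | 0, _ + 1 => 0
  | n + 1, k + 1 => gaussBinom q n k + q ^ (k + 1) * gaussBinom q n (k + 1)

@[simp]
lemma gaussBinom_zero_right (q : ℝ) (n : ℕ) : gaussBinom q n 0 = 1 := by
  cases n <;> rfl

lemma gaussBinom_succ_succ (q : ℝ) (n k : ℕ) :
    gaussBinom q (n + 1) (k + 1) = gaussBinom q n k + q ^ (k + 1) * gaussBinom q n (k + 1) :=
  rfl

lemma gaussBinom_eq_zero_of_lt (q : ℝ) {n k : ℕ} (h : n < k) : gaussBinom q n k = 0 := by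
  induction n generalizing k with
  | zero => obtain ⟨k, rfl⟩ := Nat.exists_eq_succ_of_ne_zero h.ne'; rfl
  | succ n ih =>
    obtain ⟨k, rfl⟩ := Nat.exists_eq_succ_of_ne_zero (Nat.ne_zero_of_lt h)
    rw [gaussBinom_succ_succ, ih (by omega), ih (by omega), mul_zero, add_zero]

lemma qInt_sub_mul_gaussBinom (q : ℝ) (n k : ℕ) :
    qInt q (n - k) * gaussBinom q n k = qInt q (k + 1) * gaussBinom q n (k + 1) := by
  induction n generalizing k with
  | zero => simp [qInt_zero, gaussBinom_eq_zero_of_lt]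
  | succ n ih =>
    cases k with
    | zero =>
      have h := ih 0
      rw [Nat.sub_zero, gaussBinom_zero_right, zero_add, qInt_one] at h
      rw [Nat.sub_zero, gaussBinom_zero_right, zero_add, qInt_one, gaussBinom_succ_succ,
        gaussBinom_zero_right, add_comm n 1, qInt_add, qInt_one]
      linear_combination q * h
    | succ k =>
      rw [Nat.add_sub_add_right, gaussBinom_succ_succ, gaussBinom_succ_succ]
      rcases lt_or_ge k n with hk | hk
      · have e₁ := qInt_eq_add_of_le q (show k + 1 ≤ n + 1 by omega)
        have e₂ := qInt_eq_add_of_le q (show k + 2 ≤ n + 1 by omega)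
        rw [show n + 1 - (k + 1) = n - k by omega] at e₁
        rw [show n + 1 - (k + 2) = n - (k + 1) by omega] at e₂
        linear_combination ih k + q ^ (k + 2) * ih (k + 1)
          + gaussBinom q n (k + 1) * (e₂ - e₁)
      · rw [Nat.sub_eq_zero_of_le hk, gaussBinom_eq_zero_of_lt q (by omega : n < k + 1),
          gaussBinom_eq_zero_of_lt q (by omega : n < k + 2), qInt_zero]
        ring

lemma qInt_succ_mul_gaussBinom_succ (q : ℝ) (n k : ℕ) :
    qInt q (k + 1) * gaussBinom q (n + 1) (k + 1) = qInt q (n + 1) * gaussBinom q n k := by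
  rcases le_or_gt k n with hk | hk
  · rw [gaussBinom_succ_succ, qInt_eq_add_of_le q (show k + 1 ≤ n + 1 by omega),
      show n + 1 - (k + 1) = n - k by omega]
    linear_combination q ^ (k + 1) * (qInt_sub_mul_gaussBinom q n k).symm
  · rw [gaussBinom_eq_zero_of_lt q (by omega : n + 1 < k + 1), gaussBinom_eq_zero_of_lt q hk]
    ring

lemma qInt_succ_sub_mul_gaussBinom (q : ℝ) (n k : ℕ) :
    qInt q (n + 1 - k) * gaussBinom q (n + 1) k = qInt q (n + 1) * gaussBinom q n k := by
  rw [qInt_sub_mul_gaussBinom, qInt_succ_mul_gaussBinom_succ]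

def jacobiDiag (θ q x : ℝ) (n : ℕ) : ℝ := θ * qInt q n + x * q ^ n

/-- At `n = 0` the truncated `n - 1` is harmless: the factor `[0]_q = 0` makes the value `0`. -/
def jacobiOffDiag (τ q s t : ℝ) (n : ℕ) : ℝ :=
  (t - s * q ^ (n - 1) + τ * qInt q (n - 1)) * qInt q n

lemma jacobiDiag_add (θ q x : ℝ) (k m : ℕ) :
    jacobiDiag θ q x (k + m) = θ * qInt q k + q ^ k * jacobiDiag θ q x m := by
  rw [jacobiDiag, jacobiDiag, qInt_add, pow_add]; ring

@[simp]
lemma jacobiOffDiag_zero (τ q s t : ℝ) : jacobiOffDiag τ q s t 0 = 0 := by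
  simp [jacobiOffDiag, qInt_zero]

lemma jacobiOffDiag_succ (τ q s t : ℝ) (n : ℕ) :
    jacobiOffDiag τ q s t (n + 1) = (t - s * q ^ n + τ * qInt q n) * qInt q (n + 1) := rfl

lemma Qpoly_add_two (θ τ q v x s t : ℝ) (n : ℕ) :
    Qpoly θ τ q (n + 2) v x s t = (v - jacobiDiag θ q x (n + 1)) * Qpoly θ τ q (n + 1) v x s t
      - jacobiOffDiag τ q s t (n + 1) * Qpoly θ τ q n v x s t := rfl

lemma mul_Qpoly (θ τ q v x s t : ℝ) (n : ℕ) :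
    v * Qpoly θ τ q n v x s t = Qpoly θ τ q (n + 1) v x s t
      + jacobiDiag θ q x n * Qpoly θ τ q n v x s t
      + jacobiOffDiag τ q s t n * Qpoly θ τ q (n - 1) v x s t := by
  cases n with
  | zero => simp [Qpoly, jacobiDiag, qInt_zero]
  | succ n => rw [Qpoly_add_two, Nat.add_sub_cancel]; ring

lemma jacobiOffDiag_split (τ q s t u : ℝ) {n k : ℕ} (hk : k ≤ n) :
    q ^ k * gaussBinom q (n + 1) k * jacobiOffDiag τ q s t (n + 1 - k)
      + gaussBinom q (n + 1) (k + 1) * jacobiOffDiag τ q t u (k + 1)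
      = jacobiOffDiag τ q s u (n + 1) * gaussBinom q n k := by
  have hpow : q ^ k * q ^ (n - k) = q ^ n := by rw [← pow_add, Nat.add_sub_cancel' hk]
  rw [show n + 1 - k = n - k + 1 by omega, jacobiOffDiag_succ, jacobiOffDiag_succ,
    jacobiOffDiag_succ, ← show n + 1 - k = n - k + 1 by omega]
  linear_combination
    (q ^ k * (t - s * q ^ (n - k) + τ * qInt q (n - k))) * qInt_succ_sub_mul_gaussBinom q n k
      + (u - t * q ^ k + τ * qInt q k) * qInt_succ_mul_gaussBinom_succ q n k
      - s * qInt q (n + 1) * gaussBinom q n k * hpow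
      - τ * qInt q (n + 1) * gaussBinom q n k * qInt_eq_add_of_le q hk

def qBinomConv (q : ℝ) (P R : ℕ → ℝ) (n : ℕ) : ℝ :=
  ∑ k ∈ range (n + 1), gaussBinom q n k * P k * R (n - k)

lemma qBinomConv_succ (q : ℝ) (P R : ℕ → ℝ) (n : ℕ) :
    qBinomConv q P R (n + 1) = ∑ k ∈ range (n + 1),
      gaussBinom q n k * (P (k + 1) * R (n - k) + q ^ k * P k * R (n + 1 - k)) := by
  have hshift : ∑ k ∈ range (n + 1), gaussBinom q n k * (q ^ k * P k * R (n + 1 - k))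
      = ∑ k ∈ range (n + 1), q ^ (k + 1) * gaussBinom q n (k + 1) * P (k + 1) * R (n - k)
        + P 0 * R (n + 1) := by
    rw [sum_range_succ', sum_range_succ _ n, gaussBinom_eq_zero_of_lt q n.lt_succ_self]
    simp only [Nat.add_sub_add_right, Nat.sub_zero, gaussBinom_zero_right, pow_zero, one_mul,
      mul_zero, zero_mul, add_zero]
    exact congrArg (· + _) (sum_congr rfl fun k _ => by ring)
  rw [qBinomConv, sum_range_succ']
  simp only [gaussBinom_succ_succ, Nat.add_sub_add_right, add_mul, mul_add, sum_add_distrib,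
    hshift, Nat.sub_zero, gaussBinom_zero_right, one_mul]
  simp only [mul_assoc]
  ring

lemma sum_jacobiOffDiag_eq (τ q s t u : ℝ) (P R : ℕ → ℝ) (n : ℕ) :
    ∑ k ∈ range (n + 2), gaussBinom q (n + 1) k *
        (q ^ k * jacobiOffDiag τ q s t (n + 1 - k) * P k * R (n - k)
          + jacobiOffDiag τ q t u k * P (k - 1) * R (n + 1 - k))
      = jacobiOffDiag τ q s u (n + 1) * qBinomConv q P R n := by
  simp only [mul_add, sum_add_distrib]
  rw [sum_range_succ (fun k => gaussBinom q (n + 1) k *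
      (q ^ k * jacobiOffDiag τ q s t (n + 1 - k) * P k * R (n - k))),
    sum_range_succ' (fun k => gaussBinom q (n + 1) k *
      (jacobiOffDiag τ q t u k * P (k - 1) * R (n + 1 - k))),
    qBinomConv, mul_sum]
  simp only [Nat.sub_self, jacobiOffDiag_zero, mul_zero, zero_mul, add_zero, ← sum_add_distrib]
  refine sum_congr rfl fun k hk => ?_
  rw [Nat.add_sub_cancel, Nat.add_sub_add_right]
  linear_combination P k * R (n - k) *
    jacobiOffDiag_split τ q s t u (Nat.lt_succ_iff.mp (mem_range.mp hk))

section ThreeTermRecurrence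

variable {θ τ q x y z s t u : ℝ} {P R : ℕ → ℝ}

lemma mul_qBinomConv_succ
    (hP : ∀ k, z * P k = P (k + 1) + jacobiDiag θ q y k * P k
      + jacobiOffDiag τ q t u k * P (k - 1))
    (hR : ∀ j, y * R j = R (j + 1) + jacobiDiag θ q x j * R j
      + jacobiOffDiag τ q s t j * R (j - 1))
    (n : ℕ) :
    z * qBinomConv q P R (n + 1) = qBinomConv q P R (n + 2)
      + jacobiDiag θ q x (n + 1) * qBinomConv q P R (n + 1)
      + jacobiOffDiag τ q s u (n + 1) * qBinomConv q P R n := by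
  have hterm : ∀ k ∈ range (n + 2), z * (gaussBinom q (n + 1) k * P k * R (n + 1 - k))
      = gaussBinom q (n + 1) k * (P (k + 1) * R (n + 1 - k) + q ^ k * P k * R (n + 1 + 1 - k))
        + jacobiDiag θ q x (n + 1) * (gaussBinom q (n + 1) k * P k * R (n + 1 - k))
        + gaussBinom q (n + 1) k * (q ^ k * jacobiOffDiag τ q s t (n + 1 - k) * P k * R (n - k)
          + jacobiOffDiag τ q t u k * P (k - 1) * R (n + 1 - k)) := by
    intro k hk
    have hkn : k ≤ n + 1 := Nat.lt_succ_iff.mp (mem_range.mp hk)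
    have hRk := hR (n + 1 - k)
    rw [show n + 1 - k + 1 = n + 1 + 1 - k by omega, show n + 1 - k - 1 = n - k by omega] at hRk
    have hdiag := jacobiDiag_add θ q x k (n + 1 - k)
    rw [Nat.add_sub_cancel' hkn] at hdiag
    have hdiag_y : jacobiDiag θ q y k = θ * qInt q k + y * q ^ k := rfl
    -- the `y q^k` part of the diagonal coefficient of `P` is expanded by the recurrence of `R`
    linear_combination gaussBinom q (n + 1) k * R (n + 1 - k) * (hP k)
      + q ^ k * gaussBinom q (n + 1) k * P k * hRk
      + gaussBinom q (n + 1) k * P k * R (n + 1 - k) * (hdiag_y - hdiag)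
  rw [qBinomConv, mul_sum, sum_congr rfl hterm, sum_add_distrib, sum_add_distrib,
    ← qBinomConv_succ, sum_jacobiOffDiag_eq, ← mul_sum]

end ThreeTermRecurrence

theorem Qpoly_eq_qBinomConv (θ τ q x y z s t u : ℝ) (n : ℕ) :
    Qpoly θ τ q n z x s u = qBinomConv q (fun k => Qpoly θ τ q k z y t u)
      (fun j => Qpoly θ τ q j y x s t) n := by
  induction n using Nat.twoStepInduction with
  | zero => simp [qBinomConv, Qpoly]
  | one => simp [qBinomConv, sum_range_succ, Qpoly, gaussBinom]
  | more n ih₀ ih₁ =>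
    rw [Qpoly_add_two, ih₀, ih₁]
    linear_combination mul_qBinomConv_succ (fun k => mul_Qpoly θ τ q z y t u k)
      (fun j => mul_Qpoly θ τ q y x s t j) n

open Polynomial in
lemma exists_eval_eq_Qpoly (θ τ q x s t : ℝ) (n : ℕ) :
    ∃ p : ℝ[X], ∀ v, p.eval v = Qpoly θ τ q n v x s t := by
  induction n using Nat.twoStepInduction with
  | zero => exact ⟨1, fun v => by simp [Qpoly]⟩
  | one => exact ⟨X - C x, fun v => by simp [Qpoly]⟩
  | more n ih₀ ih₁ =>
    obtain ⟨p₀, hp₀⟩ := ih₀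
    obtain ⟨p₁, hp₁⟩ := ih₁
    exact ⟨(X - C (jacobiDiag θ q x (n + 1))) * p₁ - C (jacobiOffDiag τ q s t (n + 1)) * p₀,
      fun v => by simp [Qpoly_add_two, hp₀, hp₁]⟩

open MeasureTheory

lemma integrable_polynomial_eval {ρ : Measure ℝ}
    (hρ : ∀ b : ℕ, Integrable (fun z => |z| ^ b) ρ) (p : Polynomial ℝ) : Integrable (fun z => p.eval z) ρ := by
  simp_rw [Polynomial.eval_eq_sum_range]
  refine integrable_finsetSum _ fun i _ => Integrable.const_mul ?_ _
  refine (hρ i).mono' (continuous_pow i).aestronglyMeasurable (ae_of_all _ fun z => ?_)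
  simp

lemma integrable_Qpoly {ρ : Measure ℝ} (hρ : ∀ b : ℕ, Integrable (fun z => |z| ^ b) ρ)
    (θ τ q x s t : ℝ) (n : ℕ) :
    Integrable (fun v => Qpoly θ τ q n v x s t) ρ := by
  obtain ⟨p, hp⟩ := exists_eval_eq_Qpoly θ τ q x s t n
  simpa only [hp] using integrable_polynomial_eval hρ p

lemma integral_Qpoly_of_orthogonal {ρ : Measure ℝ} [IsProbabilityMeasure ρ]
    (hρ : ∀ b : ℕ, Integrable (fun z => |z| ^ b) ρ) {θ τ q x y s t u : ℝ}
    (horth : ∀ k, 1 ≤ k → ∫ z, Qpoly θ τ q k z y t u ∂ρ = 0) (n : ℕ) :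
    ∫ z, Qpoly θ τ q n z x s u ∂ρ = Qpoly θ τ q n y x s t := by
  rw [integral_congr_ae (ae_of_all _ fun z => Qpoly_eq_qBinomConv θ τ q x y z s t u n)]
  simp only [qBinomConv]
  rw [integral_finsetSum _ fun k _ =>
      ((integrable_Qpoly hρ θ τ q y t u k).const_mul _).mul_const _,
    sum_eq_single_of_mem 0 (by simp) fun k _ hk => by
      rw [integral_mul_const, integral_const_mul, horth k (Nat.one_le_iff_ne_zero.mpr hk),
        mul_zero, zero_mul]]
  simp [Qpoly]

lemma MeasureTheory.Measure.integral_bind {α β E : Type*} [MeasurableSpace α]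
    [MeasurableSpace β] [NormedAddCommGroup E] [NormedSpace ℝ E] {μ : Measure α}
    {κ : ProbabilityTheory.Kernel α β} {f : β → E} (hf : Integrable f (μ.bind κ)) :
    ∫ b, f b ∂μ.bind κ = ∫ a, ∫ b, f b ∂κ a ∂μ := by
  rw [Measure.comp_eq_comp_const_apply] at hf ⊢
  rw [ProbabilityTheory.Kernel.integral_comp hf]
  simp

open MeasureTheory ProbabilityTheory

theorem stmt12_general (θ τ q : ℝ)
    (s t u x : ℝ)
    (μ : Measure ℝ)
    (hμorth : ∀ n : ℕ, 1 ≤ n → ∫ y, Qpoly θ τ q n y x s t ∂μ = 0)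
    (κ : Kernel ℝ ℝ) [IsMarkovKernel κ]
    (hκorth : ∀ y : ℝ, ∀ k : ℕ, 1 ≤ k → ∫ z, Qpoly θ τ q k z y t u ∂(κ y) = 0)
    (hmom : ∀ a b : ℕ,
      (∫⁻ y, ∫⁻ z, ENNReal.ofReal (|y| ^ a * |z| ^ b) ∂(κ y) ∂μ) < ⊤) :
    ∀ n : ℕ, 1 ≤ n → ∫ z, Qpoly θ τ q n z x s u ∂(μ.bind κ) = 0 := by
  intro n hn
  have hνmom (b : ℕ) : Integrable (fun z => |z| ^ b) (μ.bind κ) := by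
    have hmeas : Measurable fun z : ℝ => |z| ^ b := by fun_prop
    refine ⟨hmeas.aestronglyMeasurable, ?_⟩
    rw [hasFiniteIntegral_iff_ofReal (ae_of_all _ fun z => by positivity),
      Measure.lintegral_bind κ.aemeasurable hmeas.ennreal_ofReal.aemeasurable]
    simpa using hmom 0 b
  have hκmom : ∀ᵐ y ∂μ, ∀ b : ℕ, Integrable (fun z => |z| ^ b) (κ y) :=
    ae_all_iff.mpr fun b => Measure.ae_integrable_of_integrable_comp (hνmom b)
  rw [Measure.integral_bind (integrable_Qpoly hνmom θ τ q x s u n),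
    integral_congr_ae (hκmom.mono fun y hy => integral_Qpoly_of_orthogonal hy (hκorth y) n)]
  exact hμorth n hn

theorem stmt12 (θ τ q : ℝ) (hq1 : -1 ≤ q) (hq2 : q ≤ 1) (hτ : 0 ≤ τ)
    (s t u x : ℝ) (hs : 0 ≤ s) (hst : s < t) (htu : t < u)
    (μ : Measure ℝ) [IsProbabilityMeasure μ]
    (hμmom : ∀ a : ℕ, Integrable (fun y => |y| ^ a) μ)
    (hμorth : ∀ n : ℕ, 1 ≤ n → ∫ y, Qpoly θ τ q n y x s t ∂μ = 0)
    (κ : Kernel ℝ ℝ) [IsMarkovKernel κ]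
    (hκorth : ∀ y : ℝ, ∀ k : ℕ, 1 ≤ k → ∫ z, Qpoly θ τ q k z y t u ∂(κ y) = 0)
    (hmom : ∀ a b : ℕ,
      (∫⁻ y, ∫⁻ z, ENNReal.ofReal (|y| ^ a * |z| ^ b) ∂(κ y) ∂μ) < ⊤) :
    ∀ n : ℕ, 1 ≤ n → ∫ z, Qpoly θ τ q n z x s u ∂(μ.bind κ) = 0 :=
  stmt12_general θ τ q s t u x μ hμorth κ hκorth hmom
end
end
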